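/- arXiv:1010.4346 — 3 statements merged into one kernel-verified Lean document; each statement's English description precedes it below -/
import Mathlib

section
/- Let X be a real Banach space and let A: X ⇉ X* be a maximally monotone linear relation. Then A is of type (FPV). -/
open NormedSpace Set Pointwise

variable {X : Type*} [NormedAddCommGroup X] [NormedSpace ℝ X]

/-- The graph of a set-valued operator `A : X ⇉ X*`. -/
def gra (A : X → Set (StrongDual ℝ X)) : Set (X × StrongDual ℝ X) := {p | p.2 ∈ A p.1}

/-- The domain of a set-valued operator. -/
def domOp (A : X → Set (StrongDual ℝ X)) : Set X := {x | (A x).Nonempty}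

/-- `A` is a monotone operator. -/
def IsMonotoneOp (A : X → Set (StrongDual ℝ X)) : Prop :=
  ∀ p ∈ gra A, ∀ q ∈ gra A, 0 ≤ (p.2 - q.2) (p.1 - q.1)

/-- `A` is maximally monotone: it is monotone and has no proper monotone extension. -/
def IsMaxMonotoneOp (A : X → Set (StrongDual ℝ X)) : Prop :=
  IsMonotoneOp A ∧
    ∀ B : X → Set (StrongDual ℝ X), IsMonotoneOp B → gra A ⊆ gra B → gra B = gra A

/-- `A` is a linear relation: its graph is a linear subspace of `X × X*`. -/
def IsLinearRelation (A : X → Set (StrongDual ℝ X)) : Prop :=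
  ∃ S : Submodule ℝ (X × StrongDual ℝ X), (S : Set (X × StrongDual ℝ X)) = gra A

/-- The pointwise (Minkowski) sum of two set-valued operators. -/
def opSum (A B : X → Set (StrongDual ℝ X)) : X → Set (StrongDual ℝ X) := fun x => A x + B x

/-- Effective domain of an extended-real-valued function. -/
def fdom (f : X → EReal) : Set X := {x | f x ≠ ⊤}

/-- `f` is proper: not identically `+∞` and never `-∞`. -/
def EProper (f : X → EReal) : Prop := (∃ x, f x ≠ ⊤) ∧ ∀ x, f x ≠ ⊥

/-- Convexity of an extended-real-valued function. -/
def EConvex (f : X → EReal) : Prop :=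
  ∀ x y : X, ∀ t : ℝ, 0 ≤ t → t ≤ 1 →
    f (t • x + (1 - t) • y) ≤ (t : EReal) * f x + ((1 - t : ℝ) : EReal) * f y

/-- The subdifferential of `f`. -/
def subdiff (f : X → EReal) : X → Set (StrongDual ℝ X) :=
  fun x => {xs | ∀ y : X, ((xs (y - x) : ℝ) : EReal) + f x ≤ f y}

/-- The Fitzpatrick function of a set-valued operator. -/
noncomputable def fitz (A : X → Set (StrongDual ℝ X)) : X × StrongDual ℝ X → EReal :=
  fun p => ⨆ q ∈ gra A, ((p.2 q.1 + q.2 p.1 - q.2 q.1 : ℝ) : EReal)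

/-- `(x,x*)` is monotonically related to a set `G ⊆ X × X*`. -/
def MonRel (p : X × StrongDual ℝ X) (G : Set (X × StrongDual ℝ X)) : Prop :=
  ∀ q ∈ G, 0 ≤ (p.2 - q.2) (p.1 - q.1)

/-- A maximally monotone operator is of type (FPV). -/
def IsFPVOp (A : X → Set (StrongDual ℝ X)) : Prop :=
  IsMaxMonotoneOp A ∧
    ∀ U : Set X, IsOpen U → Convex ℝ U → (U ∩ domOp A).Nonempty →
      ∀ p : X × StrongDual ℝ X, p.1 ∈ U →
        MonRel p (gra A ∩ U ×ˢ (univ : Set (StrongDual ℝ X))) → p ∈ gra A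

/-- The normal cone operator of a set `C`. -/
def normalCone (C : Set X) : X → Set (StrongDual ℝ X) :=
  fun x => {xs | x ∈ C ∧ ∀ c ∈ C, xs (c - x) ≤ 0}

/-!
Let `S` be the graph of `A`: a monotone linear subspace of `X × X*` containing every pair that is
monotonically related to it. Fix `p` monotonically related to the points of `S` over `U`, and a
point `w ∈ S` over `U`. Because `S` is a monotone subspace, `a ↦ monGap p a` is convex on `S`, so
`E = {(a.1, r) | a ∈ S, monGap p a ≤ r} ⊆ X × ℝ` is convex; it suffices to show that `p` is
monotonically related to all of `S`.

If `(p.1, 0) ∈ closure E`, there are `a ∈ S` with `a.1` close to `p.1` and `monGap p a` close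
to `0`. For any `b ∈ S`, the point `(1 - δ) • a + δ • b` still lies over `U` for a fixed small
`δ > 0`, and convexity of the gap along this segment bounds `monGap p b` below by
`-monGap p a / δ`, which is arbitrarily small.

Otherwise some `(φ, s)` separates `(p.1, 0)` from `E`, and `s ≤ 0` since `E` is upward closed.
If `s < 0`, the pair `(p.1, p.2 + φ / (-s))` is monotonically related to `S`, hence lies in `S`,
which puts `(p.1, 0)` in `E`. If `s = 0`, then `φ` is bounded above, hence zero, on the domain,
so `(0, φ) ∈ S`; testing `p` against `w + t • (0, φ)` for all `t` gives `φ p.1 = φ w.1`,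
contradicting the separation.
-/

open Filter

def monGap (p q : X × StrongDual ℝ X) : ℝ := (p.2 - q.2) (p.1 - q.1)

lemma monGap_comm (p q : X × StrongDual ℝ X) : monGap p q = monGap q p := by
  simp only [monGap, sub_apply, map_sub]
  ring

lemma monGap_smul_add_smul (p a b : X × StrongDual ℝ X) {σ τ : ℝ} (h : σ + τ = 1) :
    monGap p (σ • a + τ • b) = σ * monGap p a + τ * monGap p b - σ * τ * monGap a b := by
  obtain rfl : τ = 1 - σ := by linarith
  simp only [monGap, Prod.fst_add, Prod.snd_add, Prod.smul_fst, Prod.smul_snd,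
    sub_apply, add_apply, smul_apply, map_sub, map_add, map_smul, smul_eq_mul]
  ring

lemma IsMaxMonotoneOp.mem_gra_of_monRel {A : X → Set (StrongDual ℝ X)}
    (hA : IsMaxMonotoneOp A) {q : X × StrongDual ℝ X} (hq : MonRel q (gra A)) : q ∈ gra A := by
  let B : X → Set (StrongDual ℝ X) := fun x => {x' | (x, x') ∈ insert q (gra A)}
  have hgraB : gra B = insert q (gra A) := rfl
  have hB : IsMonotoneOp B := by
    simp only [IsMonotoneOp, hgraB]
    rintro r (rfl | hr) s (rfl | hs)
    · simp
    · exact hq s hs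
    · show 0 ≤ monGap r s
      exact monGap_comm s r ▸ hq r hr
    · exact hA.1 r hr s hs
  rw [← hA.2 B hB (hgraB ▸ subset_insert q (gra A)), hgraB]
  exact mem_insert q _

lemma eq_zero_of_forall_mul_le {m u : ℝ} (h : ∀ t : ℝ, t * m ≤ u) : m = 0 := by
  by_contra hm
  have := h ((u + 1) / m)
  rw [div_mul_cancel₀ _ hm] at this
  linarith

lemma nonpos_of_forall_ge_mul_le {s t₀ u : ℝ} (h : ∀ t ≥ t₀, t * s ≤ u) : s ≤ 0 := by
  by_contra! hs
  obtain ⟨t, htu, ht₀⟩ := (((tendsto_id.atTop_mul_const hs).eventually_gt_atTop u).and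
    (eventually_ge_atTop t₀)).exists
  exact htu.not_ge (h t ht₀)

def gapEpigraph (S : Submodule ℝ (X × StrongDual ℝ X)) (p : X × StrongDual ℝ X) :
    Set (X × ℝ) :=
  {z | ∃ a ∈ S, a.1 = z.1 ∧ monGap p a ≤ z.2}

section

variable {S : Submodule ℝ (X × StrongDual ℝ X)} {p : X × StrongDual ℝ X}

lemma convex_gapEpigraph (hmono : ∀ a ∈ S, MonRel a S) : Convex ℝ (gapEpigraph S p) := by
  rintro ⟨_, r⟩ ⟨a, ha, rfl, hag⟩ ⟨_, r'⟩ ⟨b, hb, rfl, hbg⟩ σ τ hσ hτ hστ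
  refine ⟨σ • a + τ • b, S.add_mem (S.smul_mem σ ha) (S.smul_mem τ hb), rfl, ?_⟩
  rw [monGap_smul_add_smul p a b hστ]
  have hab : 0 ≤ σ * τ * monGap a b := mul_nonneg (mul_nonneg hσ hτ) (hmono a ha b hb)
  show _ ≤ σ * r + τ * r'
  nlinarith [mul_le_mul_of_nonneg_left hag hσ, mul_le_mul_of_nonneg_left hbg hτ]

lemma exists_near_of_mem_closure_gapEpigraph (hcl : (p.1, (0 : ℝ)) ∈ closure (gapEpigraph S p)) :
    ∀ ε > 0, ∃ a ∈ S, dist a.1 p.1 < ε ∧ monGap p a < ε := by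
  intro ε hε
  obtain ⟨⟨_, _⟩, ⟨a, ha, rfl, hag⟩, hdist⟩ := Metric.mem_closure_iff.mp hcl ε hε
  rw [Prod.dist_eq, sup_lt_iff, Real.dist_eq, zero_sub, abs_neg] at hdist
  exact ⟨a, ha, dist_comm p.1 a.1 ▸ hdist.1, hag.trans_lt ((le_abs_self _).trans_lt hdist.2)⟩

lemma monRel_of_forall_exists_near (hmono : ∀ a ∈ S, MonRel a S) {U : Set X} {r : ℝ} (hr : 0 < r)
    (hball : Metric.ball p.1 r ⊆ U) (hrel : MonRel p (↑S ∩ U ×ˢ univ))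
    (happ : ∀ ε > 0, ∃ a ∈ S, dist a.1 p.1 < ε ∧ monGap p a < ε) : MonRel p S := by
  intro b hb
  obtain ⟨c, hc, hcb⟩ := exists_pos_mul_lt (half_pos hr) (dist b.1 p.1)
  set δ := min c 1
  have hδ : 0 < δ := lt_min hc one_pos
  have hδb : δ * dist b.1 p.1 < r / 2 := by
    nlinarith [min_le_left c 1, dist_nonneg (x := b.1) (y := p.1)]
  refine le_of_forall_pos_lt_add fun ε hε => ?_
  obtain ⟨a, ha, hap, hag⟩ := happ (min (r / 2) (δ * ε)) (by positivity)
  have hap : dist a.1 p.1 < r / 2 := hap.trans_le (min_le_left _ _)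
  have hag : monGap p a < δ * ε := hag.trans_le (min_le_right _ _)
  have hcomb : (1 - δ) + δ = 1 := sub_add_cancel 1 δ
  have hdist : dist ((1 - δ) • a.1 + δ • b.1) p.1 < r :=
    calc dist ((1 - δ) • a.1 + δ • b.1) p.1
        ≤ (1 - δ) * dist a.1 p.1 + δ * dist b.1 p.1 :=
          (convexOn_dist p.1 convex_univ).2 trivial trivial (by linarith [min_le_right c 1])
            hδ.le hcomb
      _ < r := by nlinarith [min_le_right c 1]
  have hcS : (1 - δ) • a + δ • b ∈ S := S.add_mem (S.smul_mem _ ha) (S.smul_mem _ hb)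
  have hpc : 0 ≤ monGap p ((1 - δ) • a + δ • b) := hrel _ ⟨hcS, hball hdist, trivial⟩
  have hpa : 0 ≤ monGap p a := hrel a ⟨ha, hball (hap.trans (half_lt_self hr)), trivial⟩
  rw [monGap_smul_add_smul p a b hcomb] at hpc
  have hab : 0 ≤ (1 - δ) * δ * monGap a b :=
    mul_nonneg (mul_nonneg (by linarith [min_le_right c 1]) hδ.le) (hmono a ha b hb)
  have : 0 < δ * (monGap p b + ε) := by nlinarith
  exact pos_of_mul_pos_right this hδ.le

lemma fst_zero_mem_gapEpigraph_of_separated (hmax : ∀ q, MonRel q S → q ∈ S)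
    {φ : StrongDual ℝ X} {s : ℝ} (hs : s < 0)
    (hsep : ∀ a ∈ S, φ a.1 + s * monGap p a < φ p.1) : (p.1, (0 : ℝ)) ∈ gapEpigraph S p := by
  set q : X × StrongDual ℝ X := (p.1, p.2 + (-s)⁻¹ • φ)
  have hgap : ∀ a, monGap q a = monGap p a + (-s)⁻¹ * (φ p.1 - φ a.1) := by
    intro a
    simp only [q, monGap, sub_apply, add_apply, smul_apply, map_sub, smul_eq_mul]
    ring
  have hq : q ∈ S := hmax q fun a ha => by
    show 0 ≤ monGap q a
    have hinv : (-s)⁻¹ * s = -1 := by field_simp [hs.ne]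
    have := mul_lt_mul_of_pos_left (lt_sub_iff_add_lt'.2 (hsep a ha)) (inv_pos.2 (neg_pos.2 hs))
    rw [← mul_assoc, hinv] at this
    linarith [hgap a]
  exact ⟨q, hq, rfl, by simp [q, monGap]⟩

lemma apply_fst_eq_zero_of_forall_le {φ : StrongDual ℝ X} {u : ℝ} (h : ∀ a ∈ S, φ a.1 ≤ u) :
    ∀ a ∈ S, φ a.1 = 0 :=
  fun a ha => eq_zero_of_forall_mul_le fun t => by simpa using h (t • a) (S.smul_mem t ha)

lemma apply_eq_of_forall_apply_fst_eq_zero (hmono : ∀ a ∈ S, MonRel a S)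
    (hmax : ∀ q, MonRel q S → q ∈ S) {U : Set X} (hrel : MonRel p (↑S ∩ U ×ˢ univ))
    {w : X × StrongDual ℝ X} (hw : w ∈ S) (hwU : w.1 ∈ U)
    {φ : StrongDual ℝ X} (hφ : ∀ a ∈ S, φ a.1 = 0) : φ p.1 = φ w.1 := by
  have hφS : ((0 : X), φ) ∈ S := hmax _ fun a ha => by
    have := hmono a ha 0 S.zero_mem
    simp only [Prod.fst_zero, Prod.snd_zero, sub_zero, zero_sub, map_neg, sub_apply] at this ⊢
    linarith [hφ a ha]
  have hφpw : φ (p.1 - w.1) = 0 := eq_zero_of_forall_mul_le (u := monGap p w) fun t => by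
    have := hrel (w + t • ((0 : X), φ))
      ⟨S.add_mem hw (S.smul_mem t hφS), by simpa using hwU, trivial⟩
    simp only [Prod.fst_add, Prod.snd_add, Prod.smul_mk, smul_zero, add_zero, sub_add_eq_sub_sub,
      sub_apply, smul_apply, smul_eq_mul] at this
    simp only [monGap, sub_apply]
    linarith
  rwa [map_sub, sub_eq_zero] at hφpw

lemma mem_of_monRel_inter (hmono : ∀ a ∈ S, MonRel a S) (hmax : ∀ q, MonRel q S → q ∈ S)
    {U : Set X} (hU : IsOpen U) (hpU : p.1 ∈ U) (hrel : MonRel p (↑S ∩ U ×ˢ univ))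
    {w : X × StrongDual ℝ X} (hw : w ∈ S) (hwU : w.1 ∈ U) : p ∈ S := by
  refine hmax p ?_
  by_cases hcl : (p.1, (0 : ℝ)) ∈ closure (gapEpigraph S p)
  · obtain ⟨r, hr, hball⟩ := Metric.isOpen_iff.mp hU p.1 hpU
    exact monRel_of_forall_exists_near hmono hr hball hrel
      (exists_near_of_mem_closure_gapEpigraph hcl)
  obtain ⟨f, u, hfE, hfp⟩ :=
    geometric_hahn_banach_closed_point (convex_gapEpigraph hmono).closure isClosed_closure hcl
  set φ : StrongDual ℝ X := f.comp (ContinuousLinearMap.inl ℝ X ℝ)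
  set s := f (0, 1)
  have hf : ∀ x t, f (x, t) = φ x + t * s := fun x t => by
    have hxt : ((x, t) : X × ℝ) = (x, 0) + t • ((0 : X), (1 : ℝ)) := by simp
    rw [hxt, map_add, map_smul, smul_eq_mul]
    rfl
  have hfE' : ∀ a ∈ S, ∀ t ≥ monGap p a, φ a.1 + t * s < u :=
    fun a ha t ht => hf a.1 t ▸ hfE _ (subset_closure ⟨a, ha, rfl, ht⟩)
  have hs : s ≤ 0 :=
    nonpos_of_forall_ge_mul_le fun t ht => by simpa using (hfE' 0 S.zero_mem t ht).le
  rw [hf, zero_mul, add_zero] at hfp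
  have hsep : ∀ a ∈ S, φ a.1 + s * monGap p a < φ p.1 :=
    fun a ha => by linarith [hfE' a ha _ le_rfl]
  rcases hs.lt_or_eq with hs | hs
  · exact absurd (subset_closure (fst_zero_mem_gapEpigraph_of_separated hmax hs hsep)) hcl
  · simp only [hs, zero_mul, add_zero] at hsep
    have hφ := apply_fst_eq_zero_of_forall_le fun a ha => (hsep a ha).le
    linarith [hsep w hw, apply_eq_of_forall_apply_fst_eq_zero hmono hmax hrel hw hwU hφ]

end

theorem linearRelation_isFPV_general
    {X : Type*} [NormedAddCommGroup X] [NormedSpace ℝ X]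
    (A : X → Set (StrongDual ℝ X)) (hA : IsMaxMonotoneOp A) (hAlin : IsLinearRelation A) :
    IsFPVOp A := by
  obtain ⟨S, hS⟩ := hAlin
  refine ⟨hA, fun U hU _ ⟨z, hzU, z', hz'⟩ p hpU hrel => ?_⟩
  have hmono : ∀ a ∈ gra A, MonRel a (gra A) := hA.1
  have hmax : ∀ q, MonRel q (gra A) → q ∈ gra A := fun q => hA.mem_gra_of_monRel
  have hw : (z, z') ∈ gra A := hz'
  rw [← hS] at hmono hmax hrel hw ⊢
  exact mem_of_monRel_inter hmono hmax hU hpU hrel hw hzU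

/-- (Simons) Every maximally monotone linear relation on a real Banach space
is of type (FPV). -/
theorem linearRelation_isFPV
    {X : Type*} [NormedAddCommGroup X] [NormedSpace ℝ X] [CompleteSpace X]
    (A : X → Set (StrongDual ℝ X)) (hA : IsMaxMonotoneOp A) (hAlin : IsLinearRelation A) :
    IsFPVOp A :=
  linearRelation_isFPV_general A hA hAlin
end

section
/- Let X be a real Banach space, let A: X ⇉ X* be a maximally monotone linear relation, and let f: X → (−∞,+∞] be a proper lower semicontinuous convex function with (0,0) ∈ gra A ∩ gra ∂f. If (z, z*) ∈ X × X* satisfies F_{A+∂f}(z, z*) < ⟨z, z*⟩, then ⟨z, a*⟩ = 0 for every a* ∈ A0, i.e., z ∈ (A0)^⊥. -/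
open NormedSpace Set Pointwise

variable {X : Type*} [NormedAddCommGroup X] [NormedSpace ℝ X]

theorem IsLinearRelation.smul_mem {A : X → Set (StrongDual ℝ X)} (hA : IsLinearRelation A)
    {x : X} {xs : StrongDual ℝ X} (hx : xs ∈ A x) (t : ℝ) : t • xs ∈ A (t • x) := by
  obtain ⟨S, hS⟩ := hA
  have hmem : (x, xs) ∈ S := by rw [← SetLike.mem_coe, hS]; exact hx
  have hsmul : (t • x, t • xs) ∈ S := S.smul_mem t hmem
  rwa [← SetLike.mem_coe, hS] at hsmul

theorem le_fitz_of_mem_gra {A : X → Set (StrongDual ℝ X)} (p : X × StrongDual ℝ X)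
    {q : X × StrongDual ℝ X} (hq : q ∈ gra A) :
    ((p.2 q.1 + q.2 p.1 - q.2 q.1 : ℝ) : EReal) ≤ fitz A p :=
  le_iSup₂ (f := fun q (_ : q ∈ gra A) => ((p.2 q.1 + q.2 p.1 - q.2 q.1 : ℝ) : EReal)) q hq

theorem eq_zero_of_forall_mul_lt {a b : ℝ} (h : ∀ t : ℝ, t * a < b) : a = 0 := by
  by_contra ha
  simpa [div_mul_cancel₀ b ha] using h (b / a)

theorem mem_perp_of_fitz_lt_general
    {X : Type*} [NormedAddCommGroup X] [NormedSpace ℝ X]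
    (A : X → Set (StrongDual ℝ X)) (hAlin : IsLinearRelation A)
    (f : X → EReal)
    (h0f : (0 : StrongDual ℝ X) ∈ subdiff f 0)
    (z : X) (zs : StrongDual ℝ X)
    (hlt : fitz (opSum A (subdiff f)) (z, zs) < ((zs z : ℝ) : EReal)) :
    ∀ as ∈ A 0, as z = 0 := by
  intro as has
  -- `(0, t • as)` lies in the graph of `A + ∂f` for every `t`, so `t ⟨z, as⟩ ≤ F_{A+∂f}(z,z*)`.
  refine eq_zero_of_forall_mul_lt (b := zs z) fun t => ?_
  have hgra : ((0 : X), t • as) ∈ gra (opSum A (subdiff f)) := by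
    have hsmul : t • as ∈ A 0 := by simpa using hAlin.smul_mem has t
    simpa [gra, opSum] using Set.add_mem_add hsmul h0f
  have hle := le_fitz_of_mem_gra (z, zs) hgra
  simp only [map_zero, zero_add, sub_zero, smul_apply, smul_eq_mul] at hle
  exact_mod_cast hle.trans_lt hlt

/-- If `A` is a maximally monotone linear relation, `f` is proper lsc convex with
`(0,0) ∈ gra A ∩ gra ∂f`, and `F_{A+∂f}(z,z*) < ⟨z,z*⟩`, then `z ∈ (A0)^⊥`. -/
theorem mem_perp_of_fitz_lt
    {X : Type*} [NormedAddCommGroup X] [NormedSpace ℝ X] [CompleteSpace X]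
    (A : X → Set (StrongDual ℝ X)) (hA : IsMaxMonotoneOp A) (hAlin : IsLinearRelation A)
    (f : X → EReal) (hproper : EProper f) (hconv : EConvex f)
    (hlsc : LowerSemicontinuous f)
    (h0A : (0 : StrongDual ℝ X) ∈ A 0) (h0f : (0 : StrongDual ℝ X) ∈ subdiff f 0)
    (z : X) (zs : StrongDual ℝ X)
    (hlt : fitz (opSum A (subdiff f)) (z, zs) < ((zs z : ℝ) : EReal)) :
    ∀ as ∈ A 0, as z = 0 :=
  mem_perp_of_fitz_lt_general A hAlin f h0f z zs hlt
end

section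
/- Let X be a real Banach space, let A: X ⇉ X* be a maximally monotone operator, and let f: X → (−∞,+∞] be a proper lower semicontinuous convex function such that dom A ∩ int dom ∂f ≠ ∅. Then ⋃_{λ>0} λ·(P_X(dom F_A) − P_X(dom F_{∂f})) = X, where P_X: X × X* → X is the projection (x,x*) ↦ x. -/
open NormedSpace Set Pointwise

variable {X : Type*} [NormedAddCommGroup X] [NormedSpace ℝ X]

/-!
For a monotone operator `B`, the Fitzpatrick function satisfies `F_B(x, x*) ≤ ⟨x, x*⟩` on `gra B`,
so `dom B ⊆ P_X(dom F_B)`; this applies to `A` and to `∂f`. Hence, for `x₀ ∈ dom A ∩ int dom ∂f`,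
the difference `P_X(dom F_A) − P_X(dom F_{∂f})` contains `x₀ − U` for a neighbourhood `U` of `x₀`,
so it is a neighbourhood of `0` and therefore absorbing.
-/

open Filter Topology

section Operators

variable {A : X → Set (StrongDual ℝ X)}

lemma fitz_le_of_mem_gra (hA : IsMonotoneOp A) {p : X × StrongDual ℝ X} (hp : p ∈ gra A) :
    fitz A p ≤ ((p.2 p.1 : ℝ) : EReal) := by
  refine iSup₂_le fun q hq => EReal.coe_le_coe_iff.2 ?_
  have hmono := hA p hp q hq
  simp only [sub_apply, map_sub] at hmono
  linarith

lemma domOp_subset_fst_fitz_ne_top (hA : IsMonotoneOp A) :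
    domOp A ⊆ Prod.fst '' {p : X × StrongDual ℝ X | fitz A p ≠ ⊤} := fun x ⟨xs, hxs⟩ =>
  ⟨(x, xs), ne_top_of_le_ne_top (EReal.coe_ne_top _) (fitz_le_of_mem_gra hA hxs), rfl⟩

end Operators

section Subdifferential

variable {f : X → EReal}

lemma ne_top_of_mem_subdiff (hf : ∃ y, f y ≠ ⊤) {x : X} {xs : StrongDual ℝ X}
    (hxs : xs ∈ subdiff f x) : f x ≠ ⊤ := by
  obtain ⟨y, hy⟩ := hf
  intro hx
  have hsub := hxs y
  rw [hx, EReal.add_top_of_ne_bot (EReal.coe_ne_bot _)] at hsub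
  exact hy (top_le_iff.1 hsub)

lemma isMonotoneOp_subdiff (hf : EProper f) : IsMonotoneOp (subdiff f) := by
  intro p hp q hq
  lift f p.1 to ℝ using ⟨ne_top_of_mem_subdiff hf.1 hp, hf.2 _⟩ with r hr
  lift f q.1 to ℝ using ⟨ne_top_of_mem_subdiff hf.1 hq, hf.2 _⟩ with s hs
  have hpq : p.2 (q.1 - p.1) + r ≤ s :=
    EReal.coe_le_coe_iff.1 (by simpa [← hr, ← hs] using hp q.1)
  have hqp : q.2 (p.1 - q.1) + s ≤ r :=
    EReal.coe_le_coe_iff.1 (by simpa [← hr, ← hs] using hq p.1)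
  simp only [sub_apply, map_sub] at hpq hqp ⊢
  linarith

end Subdifferential

lemma iUnion_pos_smul_eq_univ_of_mem_nhds_zero {E : Type*} [AddCommGroup E] [Module ℝ E]
    [TopologicalSpace E] [ContinuousSMul ℝ E] {s : Set E} (hs : s ∈ 𝓝 (0 : E)) :
    ⋃ l : ℝ, ⋃ _ : 0 < l, l • s = univ := by
  refine eq_univ_of_forall fun x => mem_iUnion₂.2 ?_
  have hlarge : ∀ᶠ l : ℝ in atTop, {x} ⊆ l • s :=
    IsOrderBornology.atTop_le_cobounded ((absorbent_nhds_zero hs).absorbs (x := x))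
  obtain ⟨l, hl, hx⟩ := ((eventually_gt_atTop 0).and hlarge).exists
  exact ⟨l, hl, singleton_subset_iff.1 hx⟩

lemma sub_mem_nhds_zero_of_mem_of_mem_nhds {G : Type*} [AddGroup G] [TopologicalSpace G]
    [IsTopologicalAddGroup G] {s t : Set G} {x : G} (hs : x ∈ s) (ht : t ∈ 𝓝 x) :
    s - t ∈ 𝓝 (0 : G) := by
  have hxt : {x} - t ∈ 𝓝 (0 : G) := by
    simpa [singleton_sub] using (Homeomorph.subLeft x).isOpenMap.image_mem_nhds ht
  exact mem_of_superset hxt (sub_subset_sub_right (singleton_subset_iff.2 hs))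

theorem union_scaled_proj_fitz_doms_eq_univ_general
    {X : Type*} [NormedAddCommGroup X] [NormedSpace ℝ X]
    (A : X → Set (StrongDual ℝ X)) (hA : IsMaxMonotoneOp A)
    (f : X → EReal) (hproper : EProper f)
    (hcq : (domOp A ∩ interior (domOp (subdiff f))).Nonempty) :
    (⋃ l : ℝ, ⋃ _ : 0 < l,
        l • (Prod.fst '' {p : X × StrongDual ℝ X | fitz A p ≠ ⊤} -
             Prod.fst '' {p : X × StrongDual ℝ X | fitz (subdiff f) p ≠ ⊤})) =
      (univ : Set X) := by
  obtain ⟨x₀, hx₀A, hx₀f⟩ := hcq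
  have hfitzA := domOp_subset_fst_fitz_ne_top hA.1 hx₀A
  have hfitzf := mem_of_superset (mem_interior_iff_mem_nhds.1 hx₀f)
    (domOp_subset_fst_fitz_ne_top (isMonotoneOp_subdiff hproper))
  exact iUnion_pos_smul_eq_univ_of_mem_nhds_zero
    (sub_mem_nhds_zero_of_mem_of_mem_nhds hfitzA hfitzf)

/-- For a maximally monotone `A` and a proper lsc convex `f` with
`dom A ∩ int dom ∂f ≠ ∅`, one has
`⋃_{λ>0} λ (P_X(dom F_A) − P_X(dom F_{∂f})) = X`. -/
theorem union_scaled_proj_fitz_doms_eq_univ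
    {X : Type*} [NormedAddCommGroup X] [NormedSpace ℝ X] [CompleteSpace X]
    (A : X → Set (StrongDual ℝ X)) (hA : IsMaxMonotoneOp A)
    (f : X → EReal) (hproper : EProper f) (hconv : EConvex f)
    (hlsc : LowerSemicontinuous f)
    (hcq : (domOp A ∩ interior (domOp (subdiff f))).Nonempty) :
    (⋃ l : ℝ, ⋃ _ : 0 < l,
        l • (Prod.fst '' {p : X × StrongDual ℝ X | fitz A p ≠ ⊤} -
             Prod.fst '' {p : X × StrongDual ℝ X | fitz (subdiff f) p ≠ ⊤})) =
      (univ : Set X) :=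
  union_scaled_proj_fitz_doms_eq_univ_general A hA f hproper hcq
end
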